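/- arXiv:1212.0257 — 2 statements merged into one kernel-verified Lean document; each statement's English description precedes it below -/
import Mathlib

section
/- In the partially ordered monoid M_n, if two elements α₁ and α₂ have some common lower bound, then they have a greatest lower bound: there is a unique β with β ≤ α₁, β ≤ α₂, and β ≥ β' for every common lower bound β'. -/
def Translates (n : ℕ) (g : Fin n × ℕ → Fin n × ℕ) (m : Fin n → ℤ) : Prop :=
  ∃ K : Finset (Fin n × ℕ), ∀ x : Fin n × ℕ, x ∉ K →
    (g x).1 = x.1 ∧ ((g x).2 : ℤ) = (x.2 : ℤ) + m x.1

def IsEventualTranslation (n : ℕ) (g : Fin n × ℕ → Fin n × ℕ) : Prop :=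
  ∃ m : Fin n → ℤ, Translates n g m

/-- Membership in the monoid `M_n` of injective eventual translations of `Y_n`. -/
def InM (n : ℕ) (α : Fin n × ℕ → Fin n × ℕ) : Prop :=
  Function.Injective α ∧ IsEventualTranslation n α

/-- The element `t_1^{k_1} ⋯ t_n^{k_n}` of the translation monoid `T_n`. -/
def shiftMap (n : ℕ) (k : Fin n → ℕ) : Fin n × ℕ → Fin n × ℕ :=
  fun x => (x.1, x.2 + k x.1)

/-- `β ≥ α` iff `β = t·α` for some `t ∈ T_n`. -/
def Mge (n : ℕ) (β α : Fin n × ℕ → Fin n × ℕ) : Prop :=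
  ∃ k : Fin n → ℕ, β = α ∘ shiftMap n k

/- Since the shifts act ray by ray, a common lower bound `γ` with `α₁ = γ t^{k₁}` and
`α₂ = γ t^{k₂}` yields the candidate `β = γ t^{min k₁ k₂}`. The eventual translation vector
of an element is well defined, so for any other lower bound `β'` with `α₁ = β' t^a` and
`α₂ = β' t^b` the differences `k₁ - a` and `k₂ - b` agree on every ray; hence on each ray
the minimum of `k₁, k₂` and that of `a, b` are attained by the same index, and on that ray
`β = β' t^{min a b}`. Uniqueness holds because `f t^k = f` forces `k = 0` for injective `f`. -/

section Shifts

variable {n : ℕ}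

lemma shiftMap_zero : shiftMap n 0 = id :=
  rfl

lemma shiftMap_add (k l : Fin n → ℕ) : shiftMap n (k + l) = shiftMap n k ∘ shiftMap n l := by
  funext x
  exact Prod.ext rfl (by simp only [shiftMap, Function.comp_apply, Pi.add_apply]; omega)

lemma shiftMap_injective (k : Fin n → ℕ) : Function.Injective (shiftMap n k) := by
  rintro ⟨i, x⟩ ⟨j, y⟩ h
  simp only [shiftMap, Prod.mk.injEq] at h
  obtain ⟨rfl, h⟩ := h
  simp only [Prod.mk.injEq, true_and]
  omega

lemma eq_zero_of_comp_shiftMap_eq_self {f : Fin n × ℕ → Fin n × ℕ} (hf : Function.Injective f)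
    {k : Fin n → ℕ} (h : f ∘ shiftMap n k = f) : k = 0 := by
  funext i
  simpa [shiftMap] using hf (congrFun h (i, 0))

lemma Mge.antisymm {β β' : Fin n × ℕ → Fin n × ℕ} (hβ : Function.Injective β)
    (h : Mge n β β') (h' : Mge n β' β) : β = β' := by
  obtain ⟨c, hc⟩ := h
  obtain ⟨c', hc'⟩ := h'
  have hsum : c' + c = 0 := eq_zero_of_comp_shiftMap_eq_self hβ <| by
    rw [shiftMap_add, ← Function.comp_assoc, ← hc', ← hc]
  rw [hc, (add_eq_zero.mp hsum).2, shiftMap_zero, Function.comp_id]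

lemma mge_comp_shiftMap_of_le (γ : Fin n × ℕ → Fin n × ℕ) {j k : Fin n → ℕ} (h : j ≤ k) :
    Mge n (γ ∘ shiftMap n k) (γ ∘ shiftMap n j) :=
  ⟨k - j, by rw [Function.comp_assoc, ← shiftMap_add, add_tsub_cancel_of_le h]⟩

end Shifts

section Translates

variable {n : ℕ} {g : Fin n × ℕ → Fin n × ℕ} {m m' : Fin n → ℤ}

lemma Translates.unique (h : Translates n g m) (h' : Translates n g m') : m = m' := by
  obtain ⟨K, hK⟩ := h
  obtain ⟨K', hK'⟩ := h'
  funext i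
  obtain ⟨N, hN⟩ := Infinite.exists_notMem_finset ((K ∪ K').image Prod.snd)
  have hiN : (i, N) ∉ K ∪ K' := fun hmem => hN (Finset.mem_image_of_mem Prod.snd hmem)
  have e := (hK (i, N) (fun hK => hiN (Finset.mem_union_left _ hK))).2
  have e' := (hK' (i, N) (fun hK' => hiN (Finset.mem_union_right _ hK'))).2
  simp only at e e'
  omega

lemma Translates.comp_shiftMap (h : Translates n g m) (k : Fin n → ℕ) :
    Translates n (g ∘ shiftMap n k) (fun i => m i + k i) := by
  obtain ⟨K, hK⟩ := h
  refine ⟨K.preimage (shiftMap n k) (shiftMap_injective k).injOn, fun x hx => ?_⟩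
  obtain ⟨hray, hpos⟩ := hK (shiftMap n k x) (fun hmem => hx (Finset.mem_preimage.mpr hmem))
  refine ⟨hray, ?_⟩
  rw [Function.comp_apply, hpos]
  simp only [shiftMap]
  push_cast
  ring

lemma Translates.add_eq_of_comp_shiftMap_eq {β : Fin n × ℕ → Fin n × ℕ} (hg : Translates n g m)
    (hβ : Translates n β m') {k a : Fin n → ℕ} (e : g ∘ shiftMap n k = β ∘ shiftMap n a)
    (i : Fin n) : m i + k i = m' i + a i :=
  congrFun ((hg.comp_shiftMap k).unique (e ▸ hβ.comp_shiftMap a)) i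

lemma InM.comp_shiftMap (h : InM n g) (k : Fin n → ℕ) : InM n (g ∘ shiftMap n k) :=
  let ⟨_, hm⟩ := h.2
  ⟨h.1.comp (shiftMap_injective k), _, hm.comp_shiftMap k⟩

lemma comp_shiftMap_inf_eq {β : Fin n × ℕ → Fin n × ℕ} (hg : Translates n g m)
    (hβ : Translates n β m') {k₁ k₂ a b : Fin n → ℕ}
    (e₁ : g ∘ shiftMap n k₁ = β ∘ shiftMap n a) (e₂ : g ∘ shiftMap n k₂ = β ∘ shiftMap n b) :
    g ∘ shiftMap n (k₁ ⊓ k₂) = β ∘ shiftMap n (a ⊓ b) := by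
  funext ⟨i, x⟩
  have d₁ := hg.add_eq_of_comp_shiftMap_eq hβ e₁ i
  have d₂ := hg.add_eq_of_comp_shiftMap_eq hβ e₂ i
  simp only [Function.comp_apply, shiftMap, Pi.inf_apply]
  rcases le_total (k₁ i) (k₂ i) with hk | hk
  · rw [min_eq_left hk, min_eq_left (by omega : a i ≤ b i)]
    exact congrFun e₁ (i, x)
  · rw [min_eq_right hk, min_eq_right (by omega : b i ≤ a i)]
    exact congrFun e₂ (i, x)

end Translates

theorem exists_unique_glb_general (n : ℕ) (α₁ α₂ : Fin n × ℕ → Fin n × ℕ)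
    (hlb : ∃ γ, InM n γ ∧ Mge n α₁ γ ∧ Mge n α₂ γ) :
    ∃! β : Fin n × ℕ → Fin n × ℕ, InM n β ∧ Mge n α₁ β ∧ Mge n α₂ β ∧
      ∀ β', InM n β' → Mge n α₁ β' → Mge n α₂ β' → Mge n β β' := by
  obtain ⟨γ, hγ, ⟨k₁, rfl⟩, ⟨k₂, rfl⟩⟩ := hlb
  obtain ⟨mγ, hmγ⟩ := hγ.2
  have hgreatest : ∀ β', InM n β' → Mge n (γ ∘ shiftMap n k₁) β' →
      Mge n (γ ∘ shiftMap n k₂) β' → Mge n (γ ∘ shiftMap n (k₁ ⊓ k₂)) β' := by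
    rintro β' ⟨-, mβ', hmβ'⟩ ⟨a, ea⟩ ⟨b, eb⟩
    exact ⟨a ⊓ b, comp_shiftMap_inf_eq hmγ hmβ' ea eb⟩
  have hβ := hγ.comp_shiftMap (k₁ ⊓ k₂)
  have hβ₁ := mge_comp_shiftMap_of_le γ (inf_le_left : k₁ ⊓ k₂ ≤ k₁)
  have hβ₂ := mge_comp_shiftMap_of_le γ (inf_le_right : k₁ ⊓ k₂ ≤ k₂)
  refine ⟨_, ⟨hβ, hβ₁, hβ₂, hgreatest⟩, fun β ⟨hβM, h₁, h₂, hβ_ge⟩ => ?_⟩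
  exact Mge.antisymm hβM.1 (hβ_ge _ hβ hβ₁ hβ₂) (hgreatest β hβM h₁ h₂)

/-- If two elements of `M_n` have some common lower bound, then they have a
(unique) greatest lower bound. -/
theorem exists_unique_glb (n : ℕ) (α₁ α₂ : Fin n × ℕ → Fin n × ℕ)
    (h₁ : InM n α₁) (h₂ : InM n α₂)
    (hlb : ∃ γ, InM n γ ∧ Mge n α₁ γ ∧ Mge n α₂ γ) :
    ∃! β : Fin n × ℕ → Fin n × ℕ, InM n β ∧ Mge n α₁ β ∧ Mge n α₂ β ∧
      ∀ β', InM n β' → Mge n α₁ β' → Mge n α₂ β' → Mge n β β' :=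
  exists_unique_glb_general n α₁ α₂ hlb
end

section
/- For n ≥ 3, the commutator subgroup of Houghton's group H_n equals the finitary symmetric group: [H_n, H_n] = Σ_{n,∞}, and the abelianization of H_n is free abelian of rank n−1. -/
/-- Houghton's group `H_n`, as the subgroup of `Perm Y_n` consisting of the
eventual translations. -/
def Houghton (n : ℕ) : Subgroup (Equiv.Perm (Fin n × ℕ)) where
  carrier := {g | IsEventualTranslation n ⇑g}
  one_mem' := ⟨0, ∅, by intro x _; simp⟩
  mul_mem' := by
    rintro a b ⟨ma, Ka, ha⟩ ⟨mb, Kb, hb⟩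
    refine ⟨fun i => mb i + ma i,
      Kb ∪ Ka.preimage b (b.injective.injOn), ?_⟩
    intro x hx
    simp only [Finset.mem_union, Finset.mem_preimage, not_or] at hx
    have h1 := hb x hx.1
    have h2 := ha (b x) hx.2
    refine ⟨by simp [Equiv.Perm.mul_apply, h2.1, h1.1], ?_⟩
    have : ((a (b x)).2 : ℤ) = ((b x).2 : ℤ) + ma (b x).1 := h2.2
    simp only [Equiv.Perm.mul_apply, this, h1.1, h1.2]
    ring
  inv_mem' := by
    rintro g ⟨m, K, hK⟩
    refine ⟨fun i => -m i, K.image g, ?_⟩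
    intro x hx
    have hy : g.symm x ∉ K := by
      intro h
      exact hx (Finset.mem_image.2 ⟨g.symm x, h, by simp⟩)
    have h := hK (g.symm x) hy
    rw [g.apply_symm_apply] at h
    refine ⟨h.1.symm, ?_⟩
    have h2 := h.2
    rw [← h.1] at h2
    simp only [Equiv.Perm.inv_def]
    omega
/-- The finitary symmetric group `Σ_{n,∞}`, the subgroup of `Perm Y_n` of
finitely supported permutations. -/
def FinitarySymm (n : ℕ) : Subgroup (Equiv.Perm (Fin n × ℕ)) where
  carrier := {g | {x | g x ≠ x}.Finite}
  one_mem' := by simp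
  mul_mem' := by
    intro a b ha hb
    refine (ha.union hb).subset ?_
    intro x hx
    by_cases h : b x = x
    · exact Or.inl (by simpa [Equiv.Perm.mul_apply, h] using hx)
    · exact Or.inr h
  inv_mem' := by
    intro g hg
    refine hg.subset ?_
    intro x hx h
    apply hx
    show g⁻¹ x = x
    rw [Equiv.Perm.inv_def]
    exact (Equiv.symm_apply_eq g).2 h.symm


/-! The translation vector `φ : H_n → ℤⁿ` is a homomorphism with kernel `Σ_{n,∞}`, so
`[H_n, H_n] ≤ Σ_{n,∞}`. Conversely `Σ_{n,∞}` is generated by transpositions, and for `n ≥ 3` each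
of them is a commutator: for distinct rays `u, v, w` the commutator of the shifts `t_{u,v}` and
`t_{v,w}` is the transposition of the origins of the rays `u` and `v`, and conjugating it by a
finitary permutation gives any other transposition.

Counting the cells a translation carries into a tall box shows that `φ` lands in the hyperplane
`∑ mᵢ = 0`, and the shifts `t_{i,n}` hit its basis vectors `eᵢ - eₙ`. Forgetting the last
coordinate therefore identifies `H_n / [H_n, H_n] = H_n / Σ_{n,∞}` with `ℤ^{n-1}`. -/

open Equiv Finset
open scoped commutatorElement

theorem Fin.eq_zero_of_sum_eq_zero_of_castSucc {M : Type*} [AddCommMonoid M] {k : ℕ}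
    {v : Fin (k + 1) → M} (hsum : ∑ i, v i = 0) (h : ∀ i : Fin k, v i.castSucc = 0) : v = 0 := by
  rw [Fin.sum_univ_castSucc] at hsum
  simp only [h, sum_const_zero, zero_add] at hsum
  funext i
  induction i using Fin.lastCases with
  | last => exact hsum
  | cast i => exact h i

theorem Equiv.Perm.exists_mem_closure_isSwap_apply_eq {α : Type*} [DecidableEq α]
    {p q a b : α} (hpq : p ≠ q) (hab : a ≠ b) :
    ∃ f ∈ Subgroup.closure {σ : Perm α | σ.IsSwap}, f p = a ∧ f q = b := by
  have swap_mem (x y : α) : swap x y ∈ Subgroup.closure {σ : Perm α | σ.IsSwap} := by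
    rcases eq_or_ne x y with rfl | hxy
    · rw [swap_self]
      exact Subgroup.one_mem _
    · exact Subgroup.subset_closure ⟨x, y, hxy, rfl⟩
  have hq : swap p a q ≠ a := fun h =>
    hpq ((swap p a).injective (h.trans (swap_apply_left p a).symm)).symm
  refine ⟨swap (swap p a q) b * swap p a, Subgroup.mul_mem _ (swap_mem _ _) (swap_mem _ _), ?_, ?_⟩
  · rw [Perm.mul_apply, swap_apply_left, swap_apply_of_ne_of_ne hq.symm hab]
  · rw [Perm.mul_apply, swap_apply_left]

namespace Finset

variable {ι : Type*} [Fintype ι]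

def belowGraph (t : ι → ℕ) : Finset (ι × ℕ) :=
  (univ.sigma fun i => range (t i)).map (Equiv.sigmaEquivProd ι ℕ).toEmbedding

theorem mem_belowGraph {t : ι → ℕ} {x : ι × ℕ} : x ∈ belowGraph t ↔ x.2 < t x.1 := by
  simp [belowGraph, mem_map_equiv]

theorem card_belowGraph (t : ι → ℕ) : #(belowGraph t) = ∑ i, t i := by
  simp [belowGraph, card_sigma]

end Finset

namespace Translates

variable {n : ℕ}

theorem unique_s17 {g : Fin n × ℕ → Fin n × ℕ} {m m' : Fin n → ℤ}
    (h : Translates n g m) (h' : Translates n g m') : m = m' := by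
  obtain ⟨K, hK⟩ := h
  obtain ⟨K', hK'⟩ := h'
  funext i
  obtain ⟨N, hN⟩ := ((K ∪ K').image Prod.snd).exists_nat_subset_range
  have hx : (i, N) ∉ K ∪ K' := fun hx => by
    simpa using hN (mem_image_of_mem Prod.snd hx)
  have h1 := (hK (i, N) fun h => hx (mem_union_left _ h)).2
  have h2 := (hK' (i, N) fun h => hx (mem_union_right _ h)).2
  dsimp only at h1 h2
  omega

theorem mul {g h : Perm (Fin n × ℕ)} {mg mh : Fin n → ℤ}
    (hg : Translates n g mg) (hh : Translates n h mh) : Translates n ⇑(g * h) (mg + mh) := by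
  obtain ⟨Kg, hKg⟩ := hg
  obtain ⟨Kh, hKh⟩ := hh
  refine ⟨Kh ∪ Kg.map h.symm.toEmbedding, fun x hx => ?_⟩
  rw [mem_union, mem_map_equiv, symm_symm, not_or] at hx
  obtain ⟨hh1, hh2⟩ := hKh x hx.1
  obtain ⟨hg1, hg2⟩ := hKg (h x) hx.2
  refine ⟨hg1.trans hh1, ?_⟩
  rw [Perm.mul_apply, hg2, hh2, hh1, Pi.add_apply]
  ring

theorem zero_iff {g : Perm (Fin n × ℕ)} : Translates n g 0 ↔ g ∈ FinitarySymm n := by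
  constructor
  · rintro ⟨K, hK⟩
    refine K.finite_toSet.subset fun x hx => ?_
    by_contra hxK
    obtain ⟨h1, h2⟩ := hK x hxK
    exact hx (Prod.ext h1 (by simpa using h2))
  · intro hg
    refine ⟨hg.toFinset, fun x hx => ?_⟩
    have hgx : g x = x := by_contra fun h => hx ((Set.Finite.mem_toFinset _).2 h)
    simp [hgx]

theorem sum_eq_zero {g : Perm (Fin n × ℕ)} {m : Fin n → ℤ} (h : Translates n g m) :
    ∑ i, m i = 0 := by
  obtain ⟨K, hK⟩ := h
  obtain ⟨L, hL⟩ := (K.image Prod.snd ∪ K.image (fun x => (g x).2) ∪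
    univ.image fun i => (m i).natAbs).exists_nat_subset_range
  have hK_lt : ∀ x ∈ K, x.2 < L ∧ (g x).2 < L := fun x hx =>
    ⟨mem_range.1 (hL (mem_union_left _ (mem_union_left _ (mem_image_of_mem _ hx)))),
      mem_range.1 (hL (mem_union_left _ (mem_union_right _ (mem_image_of_mem _ hx))))⟩
  have hm_lt : ∀ i, (m i).natAbs < L := fun i =>
    mem_range.1 (hL (mem_union_right _ (mem_image_of_mem _ (mem_univ i))))
  -- `K` and its image lie in the box of height `L`, so `g` is a translation near height `2 * L`
  have hpreimage : (belowGraph fun _ => 2 * L).map g.symm.toEmbedding =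
      belowGraph fun i => (2 * L - m i).toNat := by
    ext x
    rw [mem_map_equiv, symm_symm, mem_belowGraph, mem_belowGraph]
    have := hm_lt x.1
    by_cases hx : x ∈ K
    · have := hK_lt x hx
      omega
    · have := hK x hx
      omega
  have hcard := congrArg Finset.card hpreimage
  rw [card_map, card_belowGraph, card_belowGraph] at hcard
  have hcast : ((∑ i, (2 * L - m i).toNat : ℕ) : ℤ) = ∑ i, (2 * L - m i) := by
    push_cast
    exact sum_congr rfl fun i _ => Int.toNat_of_nonneg (by have := hm_lt i; omega)
  rw [← hcard, sum_sub_distrib] at hcast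
  push_cast at hcast
  linarith

end Translates

namespace Houghton

variable {n : ℕ}

theorem mem_iff {g : Perm (Fin n × ℕ)} : g ∈ Houghton n ↔ ∃ m, Translates n g m := Iff.rfl

theorem finitarySymm_le : FinitarySymm n ≤ Houghton n :=
  fun _ hg => ⟨0, Translates.zero_iff.2 hg⟩

theorem finitarySymm_eq_closure_isSwap :
    FinitarySymm n = Subgroup.closure {σ : Perm (Fin n × ℕ) | σ.IsSwap} :=
  Subgroup.ext fun _ => mem_closure_isSwap'.symm

/-- The map `φ`, with values in `ℤⁿ` written multiplicatively. -/
noncomputable def translation (n : ℕ) : Houghton n →* Multiplicative (Fin n → ℤ) :=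
  MonoidHom.mk' (fun g => .ofAdd (mem_iff.1 g.2).choose) fun g h =>
    congrArg _ ((mem_iff.1 (g * h).2).choose_spec.unique_s17
      ((mem_iff.1 g.2).choose_spec.mul (mem_iff.1 h.2).choose_spec))

theorem translates_translation (g : Houghton n) : Translates n g (translation n g).toAdd :=
  (mem_iff.1 g.2).choose_spec

theorem translation_eq {g : Houghton n} {m : Fin n → ℤ} (h : Translates n g m) :
    translation n g = .ofAdd m :=
  Multiplicative.toAdd.injective ((translates_translation g).unique_s17 h)

theorem sum_translation (g : Houghton n) : ∑ i, (translation n g).toAdd i = 0 :=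
  (translates_translation g).sum_eq_zero

theorem ker_translation : (translation n).ker = (FinitarySymm n).subgroupOf (Houghton n) := by
  ext g
  rw [MonoidHom.mem_ker, Subgroup.mem_subgroupOf, ← Translates.zero_iff]
  exact ⟨fun h => by simpa [h] using translates_translation g, translation_eq⟩

theorem commutator_le_finitarySymm : ⁅Houghton n, Houghton n⁆ ≤ FinitarySymm n := by
  rw [Subgroup.commutator_le]
  intro g hg h hh
  have : ⁅(⟨g, hg⟩ : Houghton n), ⟨h, hh⟩⁆ ∈ (translation n).ker := by
    rw [MonoidHom.mem_ker, map_commutatorElement, commutatorElement_eq_one_iff_commute]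
    exact Commute.all _ _
  rwa [ker_translation, Subgroup.mem_subgroupOf] at this

/-- The generator `t_{u,v}`: it moves ray `u` out and ray `v` in, with `(v, 0) ↦ (u, 0)`. -/
def shift (u v : Fin n) (huv : u ≠ v) : Perm (Fin n × ℕ) where
  toFun x := if x.1 = u then (u, x.2 + 1)
    else if x.1 = v then (if x.2 = 0 then (u, 0) else (v, x.2 - 1)) else x
  invFun x := if x.1 = u then (if x.2 = 0 then (v, 0) else (u, x.2 - 1))
    else if x.1 = v then (v, x.2 + 1) else x
  left_inv := by
    rintro ⟨i, k⟩
    grind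
  right_inv := by
    rintro ⟨i, k⟩
    grind

theorem translates_shift (u v : Fin n) (huv : u ≠ v) :
    Translates n (shift u v huv) (Pi.single u 1 - Pi.single v 1) := by
  refine ⟨{(v, 0)}, ?_⟩
  rintro ⟨i, k⟩ hx
  simp only [shift, coe_fn_mk, Pi.sub_apply, Pi.single_apply]
  grind

theorem shift_mem (u v : Fin n) (huv : u ≠ v) : shift u v huv ∈ Houghton n :=
  ⟨_, translates_shift u v huv⟩

theorem commutator_shift_shift {u v w : Fin n} (huv : u ≠ v) (hvw : v ≠ w) (huw : u ≠ w) :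
    ⁅shift u v huv, shift v w hvw⁆ = swap (u, 0) (v, 0) := by
  ext ⟨i, k⟩ : 1
  simp only [commutatorElement_def, Perm.mul_apply, Perm.inv_def, shift, coe_fn_mk,
    coe_fn_symm_mk, swap_apply_def]
  grind

theorem swap_mem_commutator (hn : 3 ≤ n) {a b : Fin n × ℕ} (hab : a ≠ b) :
    swap a b ∈ ⁅Houghton n, Houghton n⁆ := by
  let u : Fin n := ⟨0, by omega⟩
  let v : Fin n := ⟨1, by omega⟩
  let w : Fin n := ⟨2, by omega⟩
  have huv : u ≠ v := by simp [u, v, Fin.ext_iff]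
  have hvw : v ≠ w := by simp [v, w, Fin.ext_iff]
  have huw : u ≠ w := by simp [u, w, Fin.ext_iff]
  obtain ⟨f, hf, hfu, hfv⟩ := Perm.exists_mem_closure_isSwap_apply_eq
    (p := (u, 0)) (q := (v, 0)) (by simp [huv]) hab
  have hfH : f ∈ Houghton n := finitarySymm_le (finitarySymm_eq_closure_isSwap ▸ hf)
  have conj_mem {g} (hg : g ∈ Houghton n) : MulAut.conj f g ∈ Houghton n :=
    Subgroup.mul_mem _ (Subgroup.mul_mem _ hfH hg) (Subgroup.inv_mem _ hfH)
  rw [← hfu, ← hfv, swap_apply_apply, ← commutator_shift_shift huv hvw huw, ← MulAut.conj_apply,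
    map_commutatorElement]
  exact Subgroup.commutator_mem_commutator (conj_mem (shift_mem u v huv))
    (conj_mem (shift_mem v w hvw))

theorem commutator_eq_finitarySymm (hn : 3 ≤ n) : ⁅Houghton n, Houghton n⁆ = FinitarySymm n := by
  refine le_antisymm commutator_le_finitarySymm ?_
  rw [finitarySymm_eq_closure_isSwap, Subgroup.closure_le]
  rintro _ ⟨a, b, hab, rfl⟩
  exact swap_mem_commutator hn hab

theorem commutator_eq_subgroupOf (hn : 3 ≤ n) :
    commutator (Houghton n) = (FinitarySymm n).subgroupOf (Houghton n) := by
  rw [← commutator_eq_finitarySymm hn, ← Subgroup.map_subtype_commutator, Subgroup.subgroupOf,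
    Subgroup.comap_map_eq_self_of_injective (Houghton n).subtype_injective]

noncomputable def initTranslation (k : ℕ) : Houghton (k + 1) →* Multiplicative (Fin k → ℤ) :=
  MonoidHom.mk' (fun g => .ofAdd fun i => (translation (k + 1) g).toAdd i.castSucc) fun g h => by
    rw [map_mul]
    rfl

theorem ker_initTranslation (k : ℕ) : (initTranslation k).ker = (translation (k + 1)).ker := by
  ext g
  rw [MonoidHom.mem_ker, MonoidHom.mem_ker, ← toAdd_eq_zero, ← toAdd_eq_zero]
  exact ⟨fun h => Fin.eq_zero_of_sum_eq_zero_of_castSucc (sum_translation g) (congrFun h),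
    fun h => funext fun i => congrFun h i.castSucc⟩

theorem initTranslation_shift (k : ℕ) (i : Fin k) :
    initTranslation k ⟨_, shift_mem i.castSucc (Fin.last k) i.castSucc_ne_last⟩ =
      .ofAdd (Pi.single i 1) := by
  rw [initTranslation, MonoidHom.mk'_apply,
    translation_eq (translates_shift _ _ i.castSucc_ne_last)]
  ext j
  simp [Pi.single_apply, Fin.castSucc_ne_last]

theorem initTranslation_surjective (k : ℕ) : Function.Surjective (initTranslation k) := by
  rw [← MonoidHom.range_eq_top, eq_top_iff]
  rintro c -
  have hc : c = ∏ i, .ofAdd (Pi.single i 1) ^ c.toAdd i := by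
    apply Multiplicative.toAdd.injective
    simp only [toAdd_prod, toAdd_zpow, toAdd_ofAdd, ← Pi.single_smul, smul_eq_mul, mul_one,
      univ_sum_single]
  rw [hc]
  exact Subgroup.prod_mem _ fun i _ =>
    Subgroup.zpow_mem _ (MonoidHom.mem_range.2 ⟨_, initTranslation_shift k i⟩) _

noncomputable def abelianizationEquiv {k : ℕ} (hk : 2 ≤ k) :
    Abelianization (Houghton (k + 1)) ≃* Multiplicative (Fin k → ℤ) :=
  QuotientGroup.liftEquiv _ (initTranslation_surjective k) <| by
    rw [ker_initTranslation, ker_translation, commutator_eq_subgroupOf (by omega)]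

end Houghton

theorem houghton_commutator_and_abelianization (n : ℕ) (hn : 3 ≤ n) :
    ⁅Houghton n, Houghton n⁆ = FinitarySymm n ∧
    Nonempty (Abelianization ↥(Houghton n) ≃*
      Multiplicative (Fin (n - 1) → ℤ)) := by
  refine ⟨Houghton.commutator_eq_finitarySymm hn, ?_⟩
  obtain ⟨k, rfl⟩ : ∃ k, n = k + 1 := ⟨n - 1, by omega⟩
  exact ⟨Houghton.abelianizationEquiv (by omega)⟩
end
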